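/- Let B̂ : ℝ → ℝ be convex, continuous and nonnegative, and let C > 0. Then the following two conditions are equivalent: (i) for every r ∈ ℝ there exists a subgradient s of B̂ at r with |s| ≤ C(B̂(r) + 1); (ii) for every r ∈ ℝ, every subgradient s of B̂ at r satisfies |s| ≤ C(B̂(r) + 1). -/
import Mathlib


/-- A subgradient of `f : ℝ → ℝ` at `u`: `f u + s * (y - u) ≤ f y` for all `y`
(the real inner product on `ℝ` is multiplication). -/
def HasSubgradientAt (f : ℝ → ℝ) (s u : ℝ) : Prop :=
  ∀ y, f u + s * (y - u) ≤ f y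

lemma exists_subgradient (B : ℝ → ℝ) (hB : ConvexOn ℝ Set.univ B) (r : ℝ) :
    ∃ s : ℝ, HasSubgradientAt B s r := by
  set S : Set ℝ := (fun y => (B r - B y) / (r - y)) '' Set.Iio r with hS
  have hne : S.Nonempty := ⟨_, ⟨r - 1, by simp, rfl⟩⟩
  have key : ∀ x z : ℝ, x < r → r < z →
      (B r - B x) / (r - x) ≤ (B z - B r) / (z - r) := by
    intro x z hx hz
    have := hB.slope_mono_adjacent (Set.mem_univ x) (Set.mem_univ z) hx hz
    simpa [slope, div_eq_div_iff] using this
  have hbdd : BddAbove S := by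
    refine ⟨(B (r + 1) - B r) / (r + 1 - r), ?_⟩
    rintro _ ⟨x, hx, rfl⟩
    exact key x (r + 1) hx (by linarith)
  refine ⟨sSup S, fun y => ?_⟩
  rcases lt_trichotomy y r with hy | hy | hy
  · have hle : (B r - B y) / (r - y) ≤ sSup S := le_csSup hbdd ⟨y, hy, rfl⟩
    have hpos : 0 < r - y := by linarith
    rw [div_le_iff₀ hpos] at hle
    nlinarith
  · simp [hy]
  · have hle : sSup S ≤ (B y - B r) / (y - r) := by
      refine csSup_le hne ?_
      rintro _ ⟨x, hx, rfl⟩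
      exact key x y hx hy
    have hpos : 0 < y - r := by linarith
    rw [le_div_iff₀ hpos] at hle
    nlinarith

/-- For a convex, continuous, nonnegative `B̂ : ℝ → ℝ` and `C > 0`, the growth bound
`|s| ≤ C (B̂ r + 1)` holds for *some* subgradient `s` at every `r` if and only if it holds
for *every* subgradient at every `r`. -/
theorem exists_subgradient_bound_iff_forall_subgradient_bound
    (B : ℝ → ℝ) (hB_conv : ConvexOn ℝ Set.univ B) (hB_cont : Continuous B)
    (hB_nonneg : ∀ r, 0 ≤ B r) (C : ℝ) (hC : 0 < C) :
    (∀ r : ℝ, ∃ s : ℝ, HasSubgradientAt B s r ∧ |s| ≤ C * (B r + 1)) ↔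
    (∀ r s : ℝ, HasSubgradientAt B s r → |s| ≤ C * (B r + 1)) := by
  constructor
  · intro h r s hs
    -- monotonicity of subgradients: if t is a subgradient at r', r < r', then s ≤ t
    have mono : ∀ r' t : ℝ, HasSubgradientAt B t r' → r < r' → s ≤ t := by
      intro r' t ht hlt
      have h1 := hs r'
      have h2 := ht r
      nlinarith [h1, h2]
    have mono' : ∀ r' t : ℝ, HasSubgradientAt B t r' → r' < r → t ≤ s := by
      intro r' t ht hlt
      have h1 := hs r'
      have h2 := ht r
      nlinarith [h1, h2]
    -- tendsto of ε ↦ C*(B(r+ε)+1) as ε → 0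
    have htend : Filter.Tendsto (fun ε : ℝ => C * (B (r + ε) + 1)) (nhdsWithin 0 (Set.Ioi 0))
        (nhds (C * (B r + 1))) := by
      have : Filter.Tendsto (fun ε : ℝ => C * (B (r + ε) + 1)) (nhds 0)
          (nhds (C * (B (r + 0) + 1))) := by
        apply Continuous.tendsto
        continuity
      simpa using this.mono_left nhdsWithin_le_nhds
    have htend' : Filter.Tendsto (fun ε : ℝ => C * (B (r - ε) + 1)) (nhdsWithin 0 (Set.Ioi 0))
        (nhds (C * (B r + 1))) := by
      have : Filter.Tendsto (fun ε : ℝ => C * (B (r - ε) + 1)) (nhds 0)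
          (nhds (C * (B (r - 0) + 1))) := by
        apply Continuous.tendsto
        continuity
      simpa using this.mono_left nhdsWithin_le_nhds
    have hub : s ≤ C * (B r + 1) := by
      refine ge_of_tendsto htend ?_
      filter_upwards [self_mem_nhdsWithin] with ε (hε : 0 < ε)
      obtain ⟨t, ht, htb⟩ := h (r + ε)
      have := mono (r + ε) t ht (by linarith)
      have := le_abs_self t
      linarith
    have hlb : -s ≤ C * (B r + 1) := by
      refine ge_of_tendsto htend' ?_
      filter_upwards [self_mem_nhdsWithin] with ε (hε : 0 < ε)
      obtain ⟨t, ht, htb⟩ := h (r - ε)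
      have := mono' (r - ε) t ht (by linarith)
      have := neg_abs_le t
      linarith
    exact abs_le.mpr ⟨by linarith, hub⟩
  · intro h r
    -- existence of a subgradient at r for a convex continuous function on ℝ:
    -- use the slope: s = sSup of slopes from the left, or simpler, use the right slopes.
    -- We take s as an infimum of right slopes; instead use existence via convexity.
    obtain ⟨s, hs⟩ := exists_subgradient B hB_conv r
    exact ⟨s, hs, h r s hs⟩
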